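/- Let A be a C*-algebra and let a_1, a_2, a_3, … be positive elements of A with a_1 ≾ a_2 ≾ a_3 ≾ ⋯ such that the set {a_n : n} is full in A. Then there exist δ_n > 0 such that (a_1 − δ_1)₊ ≾ (a_2 − δ_2)₊ ≾ (a_3 − δ_3)₊ ≾ ⋯ and such that the set {(a_n − δ_n)₊ : n} is full in A. -/

import Mathlib

open Filter Topology

namespace Stmt19

variable {A : Type*} [NonUnitalCStarAlgebra A] [PartialOrder A] [StarOrderedRing A]

/-- `(a - δ)₊`, via the continuous functional calculus with `t ↦ max (t - δ) 0`. -/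
noncomputable def cutoff (a : A) (δ : ℝ) : A := cfcₙ (fun t : ℝ => max (t - δ) 0) a

/-- Cuntz subequivalence `a ≾ b` inside `A`: there is a sequence `(x m)` with
`‖x m⋆ * b * x m - a‖ → 0`. -/
def CuntzLe (a b : A) : Prop :=
  ∃ x : ℕ → A, Tendsto (fun m => ‖star (x m) * b * x m - a‖) atTop (nhds 0)

/-- A family `(a n)` is full in `A`: it is not contained in any proper closed two-sided
ideal. -/
def IsFullSeq (a : ℕ → A) : Prop :=
  ∀ I : TwoSidedIdeal A, IsClosed (I : Set A) → (∀ n, a n ∈ I) → ∀ z : A, z ∈ I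

end Stmt19

/-!
Rørdam's lemma drives everything: if `p ≾ b` and `ε > 0`, pick `x` with `‖x⋆ b x - p‖ < ε`;
since `(b - δ)₊ → b` as `δ → 0⁺`, also `‖x⋆ (b - δ)₊ x - p‖ < ε` for all small `δ`, and
`‖p - c‖ < ε` forces `(p - ε)₊ ≾ c`, because `(p - ε)₊ = g(p) (p - ‖p - c‖) g(p) ≤ g(p) c g(p)`
for a suitable function `g`. So `(p - ε)₊ ≾ (b - δ)₊` for all small `δ > 0`.

Choose `δ (n + 1)` recursively so small that `(a n - δ n)₊ ≾ (a (n + 1) - δ (n + 1))₊` and also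
`(a k - 1/(n + 1))₊ ≾ (a (n + 1) - δ (n + 1))₊` for all `k ≤ n`: finitely many conditions, each
holding for all small `δ`. A closed ideal containing every `(a n - δ n)₊` then contains every
`(a k - 1/(n + 1))₊`, hence their limit `a k`, so it is everything by fullness of `(a n)`.
-/

namespace Stmt19

lemma exists_seq_forall_rel_of_forall_exists {α : Type*} {p : α → Prop}
    {r : ℕ → α → α → Prop} {x₀ : α} (h₀ : p x₀) (h : ∀ n x, p x → ∃ y, p y ∧ r n x y) :
    ∃ f : ℕ → α, (∀ n, p (f n)) ∧ ∀ n, r n (f n) (f (n + 1)) := by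
  choose g hg using h
  let f : ℕ → {x // p x} :=
    fun n => Nat.rec ⟨x₀, h₀⟩ (fun n x => ⟨g n x x.2, (hg n x x.2).1⟩) n
  exact ⟨fun n => (f n).1, fun n => (f n).2, fun n => (hg n _ (f n).2).2⟩

lemma norm_star_mul_mul_le {R : Type*} [NonUnitalNormedRing R] [StarRing R] [NormedStarGroup R]
    (x w : R) : ‖star x * w * x‖ ≤ ‖x‖ ^ 2 * ‖w‖ :=
  calc ‖star x * w * x‖ ≤ ‖star x‖ * ‖w‖ * ‖x‖ := norm_mul₃_le
    _ = ‖x‖ ^ 2 * ‖w‖ := by rw [norm_star]; ring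

section

variable {A : Type*} [NonUnitalCStarAlgebra A]

lemma cuntzLe_iff {a b : A} : CuntzLe a b ↔ ∀ ε > 0, ∃ x : A, ‖star x * b * x - a‖ < ε := by
  constructor
  · rintro ⟨x, hx⟩ ε hε
    obtain ⟨m, hm⟩ := (hx.eventually_lt_const hε).exists
    exact ⟨x m, hm⟩
  · intro h
    choose x hx using fun m : ℕ => h (1 / ((m : ℝ) + 1)) Nat.one_div_pos_of_nat
    exact ⟨x, squeeze_zero (fun _ => norm_nonneg _) (fun m => (hx m).le)
      tendsto_one_div_add_atTop_nhds_zero_nat⟩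

lemma cuntzLe_star_mul_mul (x b : A) : CuntzLe (star x * b * x) b :=
  ⟨fun _ => x, by simp⟩

lemma CuntzLe.trans {a b c : A} (hab : CuntzLe a b) (hbc : CuntzLe b c) : CuntzLe a c := by
  rw [cuntzLe_iff] at *
  intro ε hε
  obtain ⟨x, hx⟩ := hab (ε / 2) (by positivity)
  obtain ⟨y, hy⟩ := hbc (ε / 2 / (‖x‖ ^ 2 + 1)) (by positivity)
  have hconj : ‖star x * (star y * c * y - b) * x‖ ≤ ε / 2 :=
    calc _ ≤ ‖x‖ ^ 2 * (ε / 2 / (‖x‖ ^ 2 + 1)) :=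
          (norm_star_mul_mul_le _ _).trans (by gcongr)
      _ ≤ ε / 2 := by
        rw [mul_div_left_comm]
        exact mul_le_of_le_one_right (by positivity)
          ((div_le_one (by positivity)).2 (by linarith))
  refine ⟨y * x, ?_⟩
  calc ‖star (y * x) * c * (y * x) - a‖
      = ‖star x * (star y * c * y - b) * x + (star x * b * x - a)‖ := by
        rw [star_mul]; noncomm_ring
    _ ≤ ‖star x * (star y * c * y - b) * x‖ + ‖star x * b * x - a‖ := norm_add_le _ _
    _ < ε := by linarith

instance : IsTrans A CuntzLe := ⟨fun _ _ _ => CuntzLe.trans⟩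

lemma CuntzLe.mem_of_mem {I : TwoSidedIdeal A} (hI : IsClosed (I : Set A)) {a b : A}
    (h : CuntzLe a b) (hb : b ∈ I) : a ∈ I := by
  obtain ⟨x, hx⟩ := h
  refine hI.mem_of_tendsto (tendsto_iff_norm_sub_tendsto_zero.2 hx) (.of_forall fun m => ?_)
  exact I.mul_mem_right _ _ (I.mul_mem_left _ _ hb)

end

lemma exists_continuous_mul_self_mul_sub_eq_max {δ ε : ℝ} (hδ : 0 ≤ δ) (hδε : δ < ε) :
    ∃ g : ℝ → ℝ, Continuous g ∧ g 0 = 0 ∧ ∀ t, g t * g t * (t - δ) = max (t - ε) 0 := by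
  have hden : ∀ t, 0 < max (t - δ) (ε - δ) := fun t =>
    lt_of_lt_of_le (sub_pos.2 hδε) (le_max_right _ _)
  refine ⟨fun t => √(max (t - ε) 0 / max (t - δ) (ε - δ)), ?_, ?_, fun t => ?_⟩
  · exact Real.continuous_sqrt.comp <|
      (by fun_prop : Continuous fun t : ℝ => max (t - ε) 0).div (by fun_prop)
        fun t => (hden t).ne'
  · simp [hδ.trans hδε.le]
  · rw [Real.mul_self_sqrt (div_nonneg (le_max_right _ _) (hden t).le)]
    rcases le_total t ε with ht | ht
    · simp [max_eq_right (sub_nonpos.2 ht)]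
    · rw [max_eq_left (by linarith : ε - δ ≤ t - δ), div_mul_cancel₀ _ (by linarith)]

lemma norm_star_mul_self_le_of_mul_star_le {B : Type*} [NonUnitalCStarAlgebra B]
    [PartialOrder B] [StarOrderedRing B] {x b : B} (y : B) (h : x * star x ≤ b) :
    ‖star (y * x) * (y * x)‖ ≤ ‖y * b * star y‖ := by
  rw [CStarRing.norm_star_mul_self, ← CStarRing.norm_self_mul_star,
    show y * x * star (y * x) = y * (x * star x) * star y by rw [star_mul]; noncomm_ring]
  exact CStarAlgebra.norm_le_norm_of_nonneg_of_le
    (star_right_conjugate_nonneg (mul_star_self_nonneg x) y)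
    (star_right_conjugate_le_conjugate h y)

open CFC in
lemma norm_sub_sqrt_mul_cfc_mul_sqrt_le {B : Type*} [CStarAlgebra B] [PartialOrder B]
    [StarOrderedRing B] {a b : B} (ha : 0 ≤ a) (hab : a ≤ b) {q : ℝ → ℝ} (hq : Continuous q)
    {C : ℝ} (hC : 0 ≤ C) (hq_le_one : ∀ t ∈ spectrum ℝ b, q t ≤ 1)
    (hqC : ∀ t ∈ spectrum ℝ b, t * (1 - q t) ≤ C) :
    ‖a - sqrt a * cfc q b * sqrt a‖ ≤ C := by
  have hb : 0 ≤ b := ha.trans hab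
  set e := cfc (fun t => √(1 - q t)) b
  have he : IsSelfAdjoint e := cfc_predicate _ _
  have hee : e * e = 1 - cfc q b := by
    rw [← cfc_mul .., cfc_congr fun t ht => Real.mul_self_sqrt (by linarith [hq_le_one t ht]),
      cfc_sub .., cfc_const_one ..]
  have hsqrt : IsSelfAdjoint (sqrt a) := (sqrt_nonneg a).isSelfAdjoint
  have hsplit : a - sqrt a * cfc q b * sqrt a = star (e * sqrt a) * (e * sqrt a) := by
    rw [star_mul, he.star_eq, hsqrt.star_eq,
      show sqrt a * e * (e * sqrt a) = sqrt a * (e * e) * sqrt a by noncomm_ring, hee,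
      show sqrt a * (1 - cfc q b) * sqrt a = sqrt a * sqrt a - sqrt a * cfc q b * sqrt a by
        noncomm_ring, sqrt_mul_sqrt_self a]
  have hebe : e * b * star e = cfc (fun t => t * (1 - q t)) b := by
    rw [he.star_eq, ← cfc_id' ℝ b, ← cfc_mul .., ← cfc_mul .., cfc_id' ℝ b]
    exact cfc_congr fun t ht => by
      rw [mul_right_comm, Real.mul_self_sqrt (by linarith [hq_le_one t ht]), mul_comm]
  calc ‖a - sqrt a * cfc q b * sqrt a‖ = ‖star (e * sqrt a) * (e * sqrt a)‖ := by rw [hsplit]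
    _ ≤ ‖e * b * star e‖ :=
      norm_star_mul_self_le_of_mul_star_le e (by rwa [hsqrt.star_eq, sqrt_mul_sqrt_self a])
    _ = ‖cfc (fun t => t * (1 - q t)) b‖ := by rw [hebe]
    _ ≤ C := norm_cfc_le hC fun t ht => by
      have ht0 : 0 ≤ t := spectrum_nonneg_of_nonneg hb ht
      rw [Real.norm_eq_abs, abs_of_nonneg (mul_nonneg ht0 (by linarith [hq_le_one t ht]))]
      exact hqC t ht

variable {A : Type*} [NonUnitalCStarAlgebra A] [PartialOrder A] [StarOrderedRing A]

open CFC in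
lemma norm_sub_sqrt_mul_cfcₙ_mul_sqrt_le {a b : A} (ha : 0 ≤ a) (hab : a ≤ b) {q : ℝ → ℝ}
    (hq : Continuous q) (hq0 : q 0 = 0) {C : ℝ} (hC : 0 ≤ C)
    (hq_le_one : ∀ t, 0 ≤ t → q t ≤ 1) (hqC : ∀ t, 0 ≤ t → t * (1 - q t) ≤ C) :
    ‖a - sqrt a * cfcₙ q b * sqrt a‖ ≤ C := by
  have hb : 0 ≤ (b : Unitization ℂ A) := Unitization.inr_nonneg_iff.2 (ha.trans hab)
  rw [← Unitization.norm_inr (𝕜 := ℂ), Unitization.inr_sub, Unitization.inr_mul,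
    Unitization.inr_mul, ← Unitization.sqrt_inr, Unitization.real_cfcₙ_eq_cfc_inr b q hq0]
  exact norm_sub_sqrt_mul_cfc_mul_sqrt_le (Unitization.inr_nonneg_iff.2 ha)
    ((Unitization.inr_le_iff a b).2 hab) hq hC
    (fun t ht => hq_le_one t (spectrum_nonneg_of_nonneg hb ht))
    (fun t ht => hqC t (spectrum_nonneg_of_nonneg hb ht))

open CFC in
lemma cuntzLe_of_le {a b : A} (ha : 0 ≤ a) (hab : a ≤ b) : CuntzLe a b := by
  refine cuntzLe_iff.2 fun ε hε => ?_
  set c := ε / 4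
  have hc : 0 < c := by positivity
  -- `x = k(b) √a` gives `x⋆ b x = √a q(b) √a` with `q(t) = (t / (t + c))²`, near `1` for `t ≫ c`
  set k : ℝ → ℝ := fun t => √t / (|t| + c)
  have hk : Continuous k :=
    Real.continuous_sqrt.div (continuous_abs.add continuous_const) fun t => by positivity
  have hk0 : k 0 = 0 := by simp [k]
  have hb : IsSelfAdjoint b := (ha.trans hab).isSelfAdjoint
  set K := cfcₙ k b
  have hK : IsSelfAdjoint K := cfcₙ_predicate k b
  have hKbK : K * b * K = cfcₙ (fun t => t * k t ^ 2) b := by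
    rw [← cfcₙ_id' ℝ b, ← cfcₙ_mul k _ b, ← cfcₙ_mul _ k b, cfcₙ_id' ℝ b]
    exact cfcₙ_congr fun t _ => by ring
  have hq : ∀ t, 0 ≤ t → t * k t ^ 2 = (t / (t + c)) ^ 2 := fun t ht => by
    simp only [k, abs_of_nonneg ht, div_pow, Real.sq_sqrt ht]
    ring
  refine ⟨K * sqrt a, lt_of_le_of_lt (b := ε / 2) ?_ (by linarith)⟩
  rw [star_mul, hK.star_eq, (sqrt_nonneg a).isSelfAdjoint.star_eq,
    show sqrt a * K * b * (K * sqrt a) = sqrt a * (K * b * K) * sqrt a by noncomm_ring, hKbK,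
    norm_sub_rev]
  refine norm_sub_sqrt_mul_cfcₙ_mul_sqrt_le ha hab (by fun_prop) (by simp [hk0])
    (by positivity) (fun t ht => ?_) (fun t ht => ?_)
  · have hpos : 0 < t + c := by linarith
    rw [hq t ht]
    exact pow_le_one₀ (by positivity) ((div_le_one hpos).2 (by linarith))
  · have hpos : 0 < t + c := by linarith
    rw [hq t ht, ← sub_nonneg]
    have : ε / 2 - t * (1 - (t / (t + c)) ^ 2) = c * (2 * c ^ 2 + 3 * t * c) / (t + c) ^ 2 := by
      field_simp; ring
    rw [this]; positivity

lemma cutoff_nonneg (a : A) (δ : ℝ) : 0 ≤ cutoff a δ :=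
  cfcₙ_nonneg fun _ _ => le_max_right _ _

lemma norm_cutoff_sub_le {b : A} (hb : 0 ≤ b) {δ : ℝ} (hδ : 0 ≤ δ) : ‖cutoff b δ - b‖ ≤ δ := by
  have hb' : IsSelfAdjoint b := hb.isSelfAdjoint
  have hsub : cutoff b δ - b = cfcₙ (fun t : ℝ => max (t - δ) 0 - t) b := by
    rw [cfcₙ_sub .., cfcₙ_id' ℝ b, cutoff]
  rw [hsub]
  refine norm_cfcₙ_le fun t ht => ?_
  have ht0 : 0 ≤ t := quasispectrum_nonneg_of_nonneg b hb t ht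
  simpa [max_eq_left ht0, abs_of_nonneg hδ] using abs_max_sub_max_le_abs (t - δ) t 0

lemma tendsto_cutoff {b : A} (hb : 0 ≤ b) : Tendsto (cutoff b) (𝓝[>] 0) (𝓝 b) := by
  rw [tendsto_iff_norm_sub_tendsto_zero]
  refine squeeze_zero' (.of_forall fun _ => norm_nonneg _) ?_
    (tendsto_id.mono_left nhdsWithin_le_nhds)
  filter_upwards [self_mem_nhdsWithin] with δ hδ using norm_cutoff_sub_le hb (le_of_lt hδ)

lemma exists_cutoff_le_conjugate {a c : A} (ha : IsSelfAdjoint a) (hc : IsSelfAdjoint c)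
    {ε : ℝ} (h : ‖a - c‖ < ε) : ∃ g : A, cutoff a ε ≤ star g * c * g := by
  set δ := ‖a - c‖
  obtain ⟨g, hg, hg0, hgδ⟩ := exists_continuous_mul_self_mul_sub_eq_max (norm_nonneg _) h
  set G := cfcₙ g a
  have hG : IsSelfAdjoint G := cfcₙ_predicate g a
  -- `(a - ε)₊ = G (a - δ) G`, written without the unit that `A` may lack
  have hcut : cutoff a ε = G * a * G - δ • (G * G) := by
    rw [cutoff, ← cfcₙ_congr fun t _ => hgδ t, ← cfcₙ_id' ℝ a, ← cfcₙ_mul .., ← cfcₙ_mul ..,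
      ← cfcₙ_mul .., ← cfcₙ_const_mul .., ← cfcₙ_sub .., cfcₙ_id' ℝ a]
    exact cfcₙ_congr fun t _ => by ring
  refine ⟨G, ?_⟩
  rw [hcut, hG.star_eq, sub_le_comm,
    show G * a * G - G * c * G = star G * (a - c) * G by rw [hG.star_eq]; noncomm_ring]
  simpa only [hG.star_eq] using
    CStarAlgebra.star_left_conjugate_le_norm_smul (a := G) (ha.sub hc)

lemma cuntzLe_cutoff_of_norm_sub_lt {a c : A} (ha : IsSelfAdjoint a) (hc : IsSelfAdjoint c)
    {ε : ℝ} (h : ‖a - c‖ < ε) : CuntzLe (cutoff a ε) c := by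
  obtain ⟨g, hg⟩ := exists_cutoff_le_conjugate ha hc h
  exact (cuntzLe_of_le (cutoff_nonneg a ε) hg).trans (cuntzLe_star_mul_mul g c)

lemma eventually_cuntzLe_cutoff {a b : A} (ha : IsSelfAdjoint a) (hb : 0 ≤ b) (h : CuntzLe a b)
    {ε : ℝ} (hε : 0 < ε) : ∀ᶠ δ in 𝓝[>] 0, CuntzLe (cutoff a ε) (cutoff b δ) := by
  obtain ⟨x, hx⟩ := cuntzLe_iff.1 h ε hε
  have hlim : Tendsto (fun δ => ‖a - star x * cutoff b δ * x‖) (𝓝[>] 0)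
      (𝓝 ‖a - star x * b * x‖) :=
    ((((tendsto_cutoff hb).const_mul (star x)).mul_const x).const_sub a).norm
  filter_upwards [hlim.eventually_lt_const (by rwa [norm_sub_rev])] with δ hδ
  exact (cuntzLe_cutoff_of_norm_sub_lt ha ((cutoff_nonneg b δ).isSelfAdjoint.conjugate' x)
    hδ).trans (cuntzLe_star_mul_mul x _)

lemma exists_pos_cuntzLe_cutoff_succ {a : ℕ → A} (ha : ∀ n, 0 ≤ a n)
    (hinc : ∀ n, CuntzLe (a n) (a (n + 1))) (n : ℕ) {ε η : ℝ} (hε : 0 < ε) (hη : 0 < η) :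
    ∃ δ, 0 < δ ∧ CuntzLe (cutoff (a n) ε) (cutoff (a (n + 1)) δ) ∧
      ∀ k ≤ n, CuntzLe (cutoff (a k) η) (cutoff (a (n + 1)) δ) :=
  (eventually_mem_nhdsWithin.and <|
    (eventually_cuntzLe_cutoff (ha n).isSelfAdjoint (ha (n + 1)) (hinc n) hε).and <|
      (Set.finite_Iic n).eventually_all.2 fun k hk =>
        eventually_cuntzLe_cutoff (ha k).isSelfAdjoint (ha (n + 1))
          (Nat.rel_of_forall_rel_succ_of_lt _ hinc (Nat.lt_succ_of_le hk)) hη).exists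

lemma IsFullSeq.of_forall_cuntzLe_cutoff {a b : ℕ → A} (ha : ∀ n, 0 ≤ a n)
    (hfull : IsFullSeq a) {ε : ℕ → ℝ} (hε : Tendsto ε atTop (𝓝[>] 0))
    (h : ∀ k, ∀ᶠ n in atTop, CuntzLe (cutoff (a k) (ε n)) (b (n + 1))) : IsFullSeq b := by
  intro I hI hb
  refine hfull I hI fun k => hI.mem_of_tendsto ((tendsto_cutoff (ha k)).comp hε) ?_
  filter_upwards [h k] with n hn using hn.mem_of_mem hI (hb (n + 1))

/-- (From the proof of Lemma 5.9.) Given positive elements `a 1 ≾ a 2 ≾ a 3 ≾ ⋯` forming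
a full set in `A`, there are `δ n > 0` with
`(a 1 - δ 1)₊ ≾ (a 2 - δ 2)₊ ≾ ⋯` and with `{(a n - δ n)₊}` full in `A`. -/
theorem exists_cutoffs_full
    (a : ℕ → A) (ha : ∀ n, 0 ≤ a n)
    (hinc : ∀ n, CuntzLe (a n) (a (n + 1)))
    (hfull : IsFullSeq a) :
    ∃ δ : ℕ → ℝ, (∀ n, 0 < δ n) ∧
      (∀ n, CuntzLe (cutoff (a n) (δ n)) (cutoff (a (n + 1)) (δ (n + 1)))) ∧
      IsFullSeq (fun n => cutoff (a n) (δ n)) := by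
  have hε : Tendsto (fun n : ℕ => ((n : ℝ) + 1)⁻¹) atTop (𝓝[>] 0) :=
    tendsto_inv_atTop_nhdsGT_zero.comp
      (tendsto_atTop_add_const_right _ 1 tendsto_natCast_atTop_atTop)
  obtain ⟨δ, hδ, hδ_step⟩ := exists_seq_forall_rel_of_forall_exists one_pos
    fun n _ he => exists_pos_cuntzLe_cutoff_succ ha hinc n he (inv_pos.2 n.cast_add_one_pos)
  exact ⟨δ, hδ, fun n => (hδ_step n).1, IsFullSeq.of_forall_cuntzLe_cutoff ha hfull hε fun k =>
    (eventually_ge_atTop k).mono fun n hn => (hδ_step n).2 k hn⟩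

end Stmt19
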